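/- Let L > 0 and let ψ : ℝ → ℝ be a non-constant, C², L-periodic function with fundamental period L, with ψ(x) > 0 for all x, satisfying ψ''(x) − ψ(x) + ψ(x)² = 0 for all x ∈ ℝ. Suppose f, g : ℝ → ℝ are C², L-periodic functions satisfying the system −f'' + f − ψ f − ψ g = 0 and −g'' + g − 2ψ f = 0 on ℝ. Then there exists c ∈ ℝ such that f = g = c·ψ'. (That is, the kernel of the linearized operator A_R on L-periodic functions is exactly the span of (ψ', ψ').) -/

import Mathlib

open intervalIntegral MeasureTheory Set

private lemma cd2 {f : ℝ → ℝ} (hf : ContDiff ℝ 2 f) :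
    Differentiable ℝ f ∧ Differentiable ℝ (deriv f) ∧ Continuous (deriv (deriv f)) := by
  have h2 : (2 : WithTop ℕ∞) = 1 + 1 := by norm_num
  rw [h2, contDiff_succ_iff_deriv] at hf
  obtain ⟨h1, -, h3⟩ := hf
  rw [contDiff_one_iff_deriv] at h3
  exact ⟨h1, h3.1, h3.2⟩

private lemma periodic_deriv' {f : ℝ → ℝ} {L : ℝ} (hf : Function.Periodic f L) :
    Function.Periodic (deriv f) L := by
  intro x
  have h : (fun y => f (y + L)) = f := funext fun y => hf y
  calc deriv f (x + L) = deriv (fun y => f (y + L)) x := (deriv_comp_add_const f L x).symm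
    _ = deriv f x := by rw [h]

/-- integral over a period of the derivative of a periodic function vanishes -/
private lemma int_per {L : ℝ} {F G : ℝ → ℝ} (hF : ∀ x, HasDerivAt F (G x) x)
    (hG : Continuous G) (hper : F L = F 0) : ∫ x in (0:ℝ)..L, G x = 0 := by
  rw [intervalIntegral.integral_eq_sub_of_hasDerivAt (fun x _ => hF x)
    (hG.intervalIntegrable _ _), hper, sub_self]

/-- a nonneg continuous function with vanishing integral is zero on the interval -/
private lemma zero_of_int {L : ℝ} (hL : 0 < L) {h : ℝ → ℝ} (hc : Continuous h)
    (hnn : ∀ x, 0 ≤ h x) (hz : ∫ x in (0:ℝ)..L, h x = 0) : ∀ x ∈ Set.Icc (0:ℝ) L, h x = 0 := by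
  have hae := (intervalIntegral.integral_eq_zero_iff_of_le_of_nonneg_ae hL.le
    (Filter.Eventually.of_forall fun x => hnn x) (hc.intervalIntegrable _ _)).mp hz
  -- the open set where h ≠ 0 intersected with Ioc has measure zero
  have hU : IsOpen {x : ℝ | h x ≠ 0} := isOpen_ne.preimage hc
  have hmeas : volume ({x : ℝ | h x ≠ 0} ∩ Set.Ioo 0 L) = 0 := by
    have h1 : volume.restrict (Set.Ioc 0 L) {x : ℝ | h x ≠ 0} = 0 := by
      have := hae
      rw [Filter.EventuallyEq, ae_iff] at this
      simpa using this
    rw [Measure.restrict_apply₀' (by measurability)] at h1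
    · exact measure_mono_null (Set.inter_subset_inter_right _ Set.Ioo_subset_Ioc_self) h1
  have hempty : {x : ℝ | h x ≠ 0} ∩ Set.Ioo 0 L = ∅ := by
    rw [← (hU.inter isOpen_Ioo).measure_eq_zero_iff volume]
    exact hmeas
  have hIoo : Set.EqOn h 0 (Set.Ioo 0 L) := by
    intro x hx
    show h x = 0
    by_contra hne
    have hxin : x ∈ {x : ℝ | h x ≠ 0} ∩ Set.Ioo 0 L := ⟨hne, hx⟩
    rw [hempty] at hxin
    exact hxin
  have hcl : Set.EqOn h 0 (closure (Set.Ioo 0 L)) := hIoo.closure hc continuous_const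
  rw [closure_Ioo hL.ne] at hcl
  exact fun x hx => hcl hx

/-- Gronwall-type vanishing lemma for the second order linear ODE z'' = a z -/
private lemma ode_zero {a z zd : ℝ → ℝ} {C x₁ : ℝ}
    (hz : ∀ x, HasDerivAt z (zd x) x)
    (hzd : ∀ x, HasDerivAt zd (a x * z x) x)
    (hC : ∀ x, |a x| ≤ C) (h0 : z x₁ = 0) (h1 : zd x₁ = 0) : ∀ x, z x = 0 := by
  set K := C + 1 with hK
  have hK0 : 0 < K := by have := (abs_nonneg (a x₁)).trans (hC x₁); linarith
  set Q : ℝ → ℝ := fun x => z x ^ 2 + zd x ^ 2 with hQdef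
  have hQ : ∀ x, HasDerivAt Q (2 * z x * zd x + 2 * zd x * (a x * z x)) x := by
    intro x
    have := ((hz x).pow 2).add ((hzd x).pow 2)
    refine this.congr_deriv (Eq.symm ?_); ring
  have hQnn : ∀ x, 0 ≤ Q x := fun x => by positivity
  have hbound : ∀ x, |2 * z x * zd x + 2 * zd x * (a x * z x)| ≤ K * Q x := by
    intro x
    have h2 : 2 * |z x| * |zd x| ≤ z x ^ 2 + zd x ^ 2 := by nlinarith [sq_nonneg (|z x| - |zd x|), sq_abs (z x), sq_abs (zd x)]
    have ha := hC x
    have ha0 : 0 ≤ |a x| := abs_nonneg _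
    calc |2 * z x * zd x + 2 * zd x * (a x * z x)|
        ≤ |2 * z x * zd x| + |2 * zd x * (a x * z x)| := abs_add_le _ _
      _ = 2 * |z x| * |zd x| + |a x| * (2 * |z x| * |zd x|) := by
          rw [abs_mul, abs_mul, abs_mul, abs_mul, abs_mul]; simp [abs_two]; ring
      _ ≤ (z x ^ 2 + zd x ^ 2) + C * (z x ^ 2 + zd x ^ 2) := by nlinarith
      _ = K * Q x := by rw [hK, hQdef]; ring
  have hQx₁ : Q x₁ = 0 := by rw [hQdef]; simp [h0, h1]
  have key : ∀ x, Q x = 0 := by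
    intro x
    rcases le_total x₁ x with hx | hx
    · -- right of x₁ : R = Q * exp(-K t) antitone
      set R : ℝ → ℝ := fun t => Q t * Real.exp (-K * t) with hRdef
      have hR : ∀ t, HasDerivAt R ((2 * z t * zd t + 2 * zd t * (a t * z t)) * Real.exp (-K * t)
          + Q t * (-K * Real.exp (-K * t))) t := by
        intro t
        have he : HasDerivAt (fun t => Real.exp (-K * t)) (-K * Real.exp (-K * t)) t := by
          have := (Real.hasDerivAt_exp (-K * t)).comp t ((hasDerivAt_id t).const_mul (-K))
          refine this.congr_deriv (Eq.symm ?_); ring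
        exact (hQ t).mul he
      have hanti : Antitone R := by
        apply antitone_of_deriv_nonpos (fun t => (hR t).differentiableAt)
        intro t
        rw [(hR t).deriv]
        have hb := hbound t
        have hexp : 0 < Real.exp (-K * t) := Real.exp_pos _
        have h1' : 2 * z t * zd t + 2 * zd t * (a t * z t) ≤ K * Q t := (abs_le.mp hb).2
        nlinarith
      have h1' : R x ≤ R x₁ := hanti hx
      have h2' : R x₁ = 0 := by rw [hRdef]; simp [hQx₁]
      have h3' : 0 ≤ R x := mul_nonneg (hQnn x) (Real.exp_pos _).le
      have : R x = 0 := le_antisymm (h2' ▸ h1') h3'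
      have hexp : 0 < Real.exp (-K * x) := Real.exp_pos _
      rw [hRdef] at this
      simp only at this
      exact (mul_eq_zero.mp this).resolve_right hexp.ne'
    · -- left of x₁ : R = Q * exp(K t) monotone
      set R : ℝ → ℝ := fun t => Q t * Real.exp (K * t) with hRdef
      have hR : ∀ t, HasDerivAt R ((2 * z t * zd t + 2 * zd t * (a t * z t)) * Real.exp (K * t)
          + Q t * (K * Real.exp (K * t))) t := by
        intro t
        have he : HasDerivAt (fun t => Real.exp (K * t)) (K * Real.exp (K * t)) t := by
          have := (Real.hasDerivAt_exp (K * t)).comp t ((hasDerivAt_id t).const_mul K)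
          refine this.congr_deriv (Eq.symm ?_); ring
        exact (hQ t).mul he
      have hmono : Monotone R := by
        apply monotone_of_deriv_nonneg (fun t => (hR t).differentiableAt)
        intro t
        rw [(hR t).deriv]
        have hb := hbound t
        have hexp : 0 < Real.exp (K * t) := Real.exp_pos _
        have h1' : -(K * Q t) ≤ 2 * z t * zd t + 2 * zd t * (a t * z t) := neg_le_of_abs_le hb
        nlinarith
      have h1' : R x ≤ R x₁ := hmono hx
      have h2' : R x₁ = 0 := by rw [hRdef]; simp [hQx₁]
      have h3' : 0 ≤ R x := mul_nonneg (hQnn x) (Real.exp_pos _).le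
      have : R x = 0 := le_antisymm (h2' ▸ h1') h3'
      have hexp : 0 < Real.exp (K * x) := Real.exp_pos _
      rw [hRdef] at this
      simp only at this
      exact (mul_eq_zero.mp this).resolve_right hexp.ne'
  intro x
  have hx := key x
  rw [hQdef] at hx
  simp only at hx
  have h2 : z x ^ 2 = 0 := by nlinarith [sq_nonneg (zd x), sq_nonneg (z x)]
  exact pow_eq_zero_iff two_ne_zero |>.mp h2

/-- If `z` is an `L`-periodic solution of `z'' = (1-2p)z` whose Wronskian with `p'` is a
nonzero constant, where `p'' = p - p²` is `L`-periodic, then `∫ p'² = 0`. -/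
private lemma wronskian_contra {L : ℝ} {p p' p'' z zd : ℝ → ℝ} {W : ℝ}
    (hp : ∀ x, HasDerivAt p (p' x) x) (hp' : ∀ x, HasDerivAt p' (p'' x) x)
    (hpode : ∀ x, p'' x = p x - p x ^ 2)
    (hz : ∀ x, HasDerivAt z (zd x) x)
    (hzd : ∀ x, HasDerivAt zd ((1 - 2 * p x) * z x) x)
    (hpc : Continuous p) (hp'c : Continuous p') (hzc : Continuous z) (hzdc : Continuous zd)
    (hpL : p L = p 0) (hp'L : p' L = p' 0) (hzL : z L = z 0) (hzdL : zd L = zd 0)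
    (hW : ∀ x, z x * p'' x - zd x * p' x = W) (hWne : W ≠ 0) :
    ∫ x in (0:ℝ)..L, p' x ^ 2 = 0 := by
  -- integrability of all atoms
  have iz : IntervalIntegrable z volume 0 L := hzc.intervalIntegrable _ _
  have izp : IntervalIntegrable (fun x => z x * p x) volume 0 L := (hzc.mul hpc).intervalIntegrable _ _
  have izp2 : IntervalIntegrable (fun x => z x * p x ^ 2) volume 0 L :=
    (hzc.mul (hpc.pow 2)).intervalIntegrable _ _
  have izp3 : IntervalIntegrable (fun x => z x * p x ^ 3) volume 0 L :=
    (hzc.mul (hpc.pow 3)).intervalIntegrable _ _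
  have izpp2 : IntervalIntegrable (fun x => z x * p' x ^ 2) volume 0 L :=
    (hzc.mul (hp'c.pow 2)).intervalIntegrable _ _
  have izd : IntervalIntegrable (fun x => zd x * p' x) volume 0 L :=
    (hzdc.mul hp'c).intervalIntegrable _ _
  have izdp : IntervalIntegrable (fun x => zd x * p' x * p x) volume 0 L :=
    ((hzdc.mul hp'c).mul hpc).intervalIntegrable _ _
  have ip : IntervalIntegrable p volume 0 L := hpc.intervalIntegrable _ _
  have ip2 : IntervalIntegrable (fun x => p x ^ 2) volume 0 L := (hpc.pow 2).intervalIntegrable _ _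
  have ip3 : IntervalIntegrable (fun x => p x ^ 3) volume 0 L := (hpc.pow 3).intervalIntegrable _ _
  have ipp2 : IntervalIntegrable (fun x => p' x ^ 2) volume 0 L := (hp'c.pow 2).intervalIntegrable _ _
  -- energy constant
  set E : ℝ := p' 0 ^ 2 / 2 - p 0 ^ 2 / 2 + p 0 ^ 3 / 3 with hEdef
  have hE : ∀ x, p' x ^ 2 / 2 - p x ^ 2 / 2 + p x ^ 3 / 3 = E := by
    have hder : ∀ x, HasDerivAt (fun x => p' x ^ 2 / 2 - p x ^ 2 / 2 + p x ^ 3 / 3) 0 x := by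
      intro x
      have h := (((hp' x).pow 2).div_const 2).sub (((hp x).pow 2).div_const 2) |>.add
        (((hp x).pow 3).div_const 3)
      refine h.congr_deriv (Eq.symm ?_)
      rw [hpode x]; push_cast; ring
    have := is_const_of_deriv_eq_zero (fun x => (hder x).differentiableAt)
      (fun x => (hder x).deriv) 
    intro x; exact this x 0
  -- e1 : m2 = 0
  have e1 : (∫ x in (0:ℝ)..L, z x * p x ^ 2) = 0 := by
    have hF : ∀ x : ℝ, HasDerivAt (fun x => zd x * p x - z x * p' x)
        (-(z x * p x ^ 2)) x := by
      intro x
      have h := ((hzd x).mul (hp x)).sub ((hz x).mul (hp' x))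
      refine h.congr_deriv (Eq.symm ?_)
      rw [hpode x]; ring
    have h0 := int_per (L := L) hF (by fun_prop) (by simp only [hzL, hp'L, hpL, hzdL])
    rw [intervalIntegral.integral_neg] at h0
    linarith
  -- e2 : J = 0
  have e2 : (∫ x in (0:ℝ)..L, z x * p' x ^ 2) = 0 := by
    have hF : ∀ x : ℝ, HasDerivAt (fun x => zd x * (p x - p x ^ 2) - z x * p' x * (1 - 2 * p x))
        (2 * (z x * p' x ^ 2)) x := by
      intro x
      have h := ((hzd x).mul ((hp x).sub ((hp x).pow 2))).sub
        (((hz x).mul (hp' x)).mul ((hasDerivAt_const x (1:ℝ)).sub ((hp x).const_mul 2)))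
      refine h.congr_deriv (Eq.symm ?_); simp only [Pi.mul_apply, Pi.sub_apply, Pi.pow_apply]
      rw [hpode x]; push_cast; ring
    have h0 := int_per (L := L) hF (by fun_prop) (by simp only [hzL, hp'L, hpL, hzdL])
    rw [intervalIntegral.integral_const_mul] at h0
    linarith
  -- e3 : A + (m1 - m2) = 0
  have e3 : (∫ x in (0:ℝ)..L, zd x * p' x) +
      ((∫ x in (0:ℝ)..L, z x * p x) - ∫ x in (0:ℝ)..L, z x * p x ^ 2) = 0 := by
    have hF : ∀ x : ℝ, HasDerivAt (fun x => z x * p' x)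
        (zd x * p' x + (z x * p x - z x * p x ^ 2)) x := by
      intro x
      have h := (hz x).mul (hp' x)
      refine h.congr_deriv (Eq.symm ?_)
      rw [hpode x]; ring
    have h0 := int_per (L := L) hF (by fun_prop) (by simp only [hzL, hp'L])
    rwa [intervalIntegral.integral_add izd (izp.sub izp2),
      intervalIntegral.integral_sub izp izp2] at h0
  -- e4 : (m1 - m2) - A = W * L
  have e4 : ((∫ x in (0:ℝ)..L, z x * p x) - ∫ x in (0:ℝ)..L, z x * p x ^ 2) -
      (∫ x in (0:ℝ)..L, zd x * p' x) = W * L := by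
    have hcongr : (∫ x in (0:ℝ)..L, (z x * p x - z x * p x ^ 2 - zd x * p' x)) =
        ∫ _x in (0:ℝ)..L, W := by
      apply intervalIntegral.integral_congr
      intro x _
      show z x * p x - z x * p x ^ 2 - zd x * p' x = W
      have h := hW x
      rw [hpode x] at h
      linarith
    rw [intervalIntegral.integral_const, intervalIntegral.integral_sub (izp.sub izp2) izd,
      intervalIntegral.integral_sub izp izp2] at hcongr
    rw [hcongr]; simp [smul_eq_mul]; ring
  -- e5 : m0 - 2 m1 = 0
  have e5 : (∫ x in (0:ℝ)..L, z x) - 2 * (∫ x in (0:ℝ)..L, z x * p x) = 0 := by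
    have hF : ∀ x : ℝ, HasDerivAt zd (z x - 2 * (z x * p x)) x := by
      intro x
      convert hzd x using 1
      ring
    have h0 := int_per (L := L) hF (by fun_prop) hzdL
    rwa [intervalIntegral.integral_sub iz (izp.const_mul 2),
      intervalIntegral.integral_const_mul] at h0
  -- e6 : B + ((m2 - m3) + J) = 0
  have e6 : (∫ x in (0:ℝ)..L, zd x * p' x * p x) +
      (((∫ x in (0:ℝ)..L, z x * p x ^ 2) - ∫ x in (0:ℝ)..L, z x * p x ^ 3) +
        ∫ x in (0:ℝ)..L, z x * p' x ^ 2) = 0 := by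
    have hF : ∀ x : ℝ, HasDerivAt (fun x => z x * p' x * p x)
        (zd x * p' x * p x + ((z x * p x ^ 2 - z x * p x ^ 3) + z x * p' x ^ 2)) x := by
      intro x
      have h := ((hz x).mul (hp' x)).mul (hp x)
      refine h.congr_deriv (Eq.symm ?_); simp only [Pi.mul_apply, Pi.sub_apply, Pi.pow_apply]
      rw [hpode x]; ring
    have h0 := int_per (L := L) hF (by fun_prop) (by simp only [hzL, hp'L, hpL])
    rwa [intervalIntegral.integral_add izdp ((izp2.sub izp3).add izpp2),
      intervalIntegral.integral_add (izp2.sub izp3) izpp2,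
      intervalIntegral.integral_sub izp2 izp3] at h0
  -- e7 : (m2 - m3) - B = W * P1
  have e7 : ((∫ x in (0:ℝ)..L, z x * p x ^ 2) - ∫ x in (0:ℝ)..L, z x * p x ^ 3) -
      (∫ x in (0:ℝ)..L, zd x * p' x * p x) = W * ∫ x in (0:ℝ)..L, p x := by
    have hcongr : (∫ x in (0:ℝ)..L, (z x * p x ^ 2 - z x * p x ^ 3 - zd x * p' x * p x)) =
        ∫ x in (0:ℝ)..L, W * p x := by
      apply intervalIntegral.integral_congr
      intro x _
      show z x * p x ^ 2 - z x * p x ^ 3 - zd x * p' x * p x = W * p x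
      have h := hW x
      rw [hpode x] at h
      linear_combination p x * h
    rw [intervalIntegral.integral_const_mul, intervalIntegral.integral_sub (izp2.sub izp3) izdp,
      intervalIntegral.integral_sub izp2 izp3] at hcongr
    exact hcongr
  -- e8 : J = 2E m0 + (m2 - 2/3 m3)
  have e8 : (∫ x in (0:ℝ)..L, z x * p' x ^ 2) =
      2 * E * (∫ x in (0:ℝ)..L, z x) +
        ((∫ x in (0:ℝ)..L, z x * p x ^ 2) - 2/3 * ∫ x in (0:ℝ)..L, z x * p x ^ 3) := by
    have hcongr : (∫ x in (0:ℝ)..L, z x * p' x ^ 2) =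
        ∫ x in (0:ℝ)..L, (2 * E * z x + (z x * p x ^ 2 - 2/3 * (z x * p x ^ 3))) := by
      apply intervalIntegral.integral_congr
      intro x _
      show z x * p' x ^ 2 = 2 * E * z x + (z x * p x ^ 2 - 2/3 * (z x * p x ^ 3))
      have h := hE x
      linear_combination 2 * z x * h
    rw [intervalIntegral.integral_add ((iz.const_mul (2*E))) (izp2.sub (izp3.const_mul (2/3))),
      intervalIntegral.integral_sub izp2 (izp3.const_mul (2/3)),
      intervalIntegral.integral_const_mul, intervalIntegral.integral_const_mul] at hcongr
    exact hcongr
  -- e9 : S = 2EL + (P2 - 2/3 P3)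
  have e9 : (∫ x in (0:ℝ)..L, p' x ^ 2) =
      2 * E * L + ((∫ x in (0:ℝ)..L, p x ^ 2) - 2/3 * ∫ x in (0:ℝ)..L, p x ^ 3) := by
    have hcongr : (∫ x in (0:ℝ)..L, p' x ^ 2) =
        ∫ x in (0:ℝ)..L, ((2 * E : ℝ) + (p x ^ 2 - 2/3 * p x ^ 3)) := by
      apply intervalIntegral.integral_congr
      intro x _
      show p' x ^ 2 = (2 * E : ℝ) + (p x ^ 2 - 2/3 * p x ^ 3)
      have h := hE x
      linear_combination 2 * h
    rw [intervalIntegral.integral_add (intervalIntegrable_const) (ip2.sub (ip3.const_mul (2/3))),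
      intervalIntegral.integral_sub ip2 (ip3.const_mul (2/3)),
      intervalIntegral.integral_const_mul, intervalIntegral.integral_const] at hcongr
    rw [hcongr]; simp [smul_eq_mul]; ring
  -- e10 : S + (P2 - P3) = 0
  have e10 : (∫ x in (0:ℝ)..L, p' x ^ 2) +
      ((∫ x in (0:ℝ)..L, p x ^ 2) - ∫ x in (0:ℝ)..L, p x ^ 3) = 0 := by
    have hF : ∀ x : ℝ, HasDerivAt (fun x => p x * p' x)
        (p' x ^ 2 + (p x ^ 2 - p x ^ 3)) x := by
      intro x
      have h := (hp x).mul (hp' x)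
      refine h.congr_deriv (Eq.symm ?_)
      rw [hpode x]; ring
    have h0 := int_per (L := L) hF (by fun_prop) (by simp only [hpL, hp'L])
    rwa [intervalIntegral.integral_add ipp2 (ip2.sub ip3),
      intervalIntegral.integral_sub ip2 ip3] at h0
  -- e11 : P1 = P2
  have e11 : (∫ x in (0:ℝ)..L, p x) - (∫ x in (0:ℝ)..L, p x ^ 2) = 0 := by
    have hF : ∀ x : ℝ, HasDerivAt p' (p x - p x ^ 2) x := by
      intro x
      have h := hp' x
      convert h using 1
      rw [hpode x]
    have h0 := int_per (L := L) hF (by fun_prop) hp'L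
    rwa [intervalIntegral.integral_sub ip ip2] at h0
  -- now solve the linear system
  set m0 := ∫ x in (0:ℝ)..L, z x
  set m1 := ∫ x in (0:ℝ)..L, z x * p x
  set m2 := ∫ x in (0:ℝ)..L, z x * p x ^ 2
  set m3 := ∫ x in (0:ℝ)..L, z x * p x ^ 3
  set J := ∫ x in (0:ℝ)..L, z x * p' x ^ 2
  set A := ∫ x in (0:ℝ)..L, zd x * p' x
  set B := ∫ x in (0:ℝ)..L, zd x * p' x * p x
  set P1 := ∫ x in (0:ℝ)..L, p x
  set P2 := ∫ x in (0:ℝ)..L, p x ^ 2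
  set P3 := ∫ x in (0:ℝ)..L, p x ^ 3
  set S := ∫ x in (0:ℝ)..L, p' x ^ 2
  have hm0 : m0 = W * L := by linarith
  have hm3 : m3 = -(W * P1) / 2 := by linarith
  rw [e2, e1, hm0, hm3] at e8
  have hWfac : W * (2 * E * L + P1 / 3) = 0 := by linear_combination -e8
  have h0 : 2 * E * L + P1 / 3 = 0 := by
    rcases mul_eq_zero.mp hWfac with h | h
    · exact absurd h hWne
    · exact h
  linarith


private lemma stage1 {L : ℝ} (hL : 0 < L) {ψ v vd : ℝ → ℝ} (hψpos : ∀ x, 0 < ψ x)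
    (hψc : Continuous ψ)
    (hv : ∀ x, HasDerivAt v (vd x) x) (hvd : ∀ x, HasDerivAt vd ((1 + ψ x) * v x) x)
    (hvc : Continuous v) (hvdc : Continuous vd)
    (hvper : Function.Periodic v L) (hvdL : vd L = vd 0) :
    ∀ x, v x = 0 := by
  have hvL : v L = v 0 := by simpa using hvper 0
  have hF : ∀ x : ℝ, HasDerivAt (fun x => v x * vd x) (vd x ^ 2 + (1 + ψ x) * v x ^ 2) x := by
    intro x
    have h := (hv x).mul (hvd x)
    refine h.congr_deriv (Eq.symm ?_)
    ring
  have h0 := int_per (L := L) hF (by fun_prop) (by simp only [hvL, hvdL])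
  have hzero := zero_of_int hL (h := fun x => vd x ^ 2 + (1 + ψ x) * v x ^ 2) (by fun_prop)
    (fun x => by show (0:ℝ) ≤ vd x ^ 2 + (1 + ψ x) * v x ^ 2; nlinarith [sq_nonneg (vd x), sq_nonneg (v x), hψpos x]) h0
  have hIcc : ∀ x ∈ Set.Icc (0:ℝ) L, v x = 0 := by
    intro x hx
    have h := hzero x hx
    have h1 := hψpos x
    have h2 : v x ^ 2 = 0 := by nlinarith [sq_nonneg (vd x), sq_nonneg (v x)]
    exact pow_eq_zero_iff two_ne_zero |>.mp h2
  intro x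
  obtain ⟨y, hy, hxy⟩ := hvper.exists_mem_Ico₀ hL x
  rw [hxy]
  exact hIcc y (Set.Ico_subset_Icc_self hy)

/-- The kernel of the linearized operator `A_R` on `L`-periodic functions is spanned by
`(ψ', ψ')`: any `C²`, `L`-periodic pair `(f, g)` with `−f'' + f − ψf − ψg = 0` and
`−g'' + g − 2ψf = 0` is a scalar multiple of `(ψ', ψ')`. -/
theorem stmt_16 (L : ℝ) (hL : 0 < L) (ψ : ℝ → ℝ)
    (hψ : ContDiff ℝ 2 ψ) (hnc : ∃ x y : ℝ, ψ x ≠ ψ y)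
    (hfund : IsLeast {T : ℝ | 0 < T ∧ Function.Periodic ψ T} L)
    (hpos : ∀ x, 0 < ψ x)
    (hode : ∀ x, deriv (deriv ψ) x - ψ x + ψ x ^ 2 = 0)
    (f g : ℝ → ℝ)
    (hf : ContDiff ℝ 2 f) (hfper : Function.Periodic f L)
    (hg : ContDiff ℝ 2 g) (hgper : Function.Periodic g L)
    (heq1 : ∀ x, -deriv (deriv f) x + f x - ψ x * f x - ψ x * g x = 0)
    (heq2 : ∀ x, -deriv (deriv g) x + g x - 2 * ψ x * f x = 0) :
    ∃ c : ℝ, (∀ x, f x = c * deriv ψ x) ∧ (∀ x, g x = c * deriv ψ x) := by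
  obtain ⟨hfd, hfd', hfc2⟩ := cd2 hf
  obtain ⟨hgd, hgd', hgc2⟩ := cd2 hg
  obtain ⟨hψd, hψd', hψc2⟩ := cd2 hψ
  have Hf : ∀ x, HasDerivAt f (deriv f x) x := fun x => (hfd x).hasDerivAt
  have Hf' : ∀ x, HasDerivAt (deriv f) (deriv (deriv f) x) x := fun x => (hfd' x).hasDerivAt
  have Hg : ∀ x, HasDerivAt g (deriv g x) x := fun x => (hgd x).hasDerivAt
  have Hg' : ∀ x, HasDerivAt (deriv g) (deriv (deriv g) x) x := fun x => (hgd' x).hasDerivAt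
  have Hψ : ∀ x, HasDerivAt ψ (deriv ψ x) x := fun x => (hψd x).hasDerivAt
  have Hψ' : ∀ x, HasDerivAt (deriv ψ) (deriv (deriv ψ) x) x := fun x => (hψd' x).hasDerivAt
  have Cψ : Continuous ψ := hψd.continuous
  have Cψ' : Continuous (deriv ψ) := hψd'.continuous
  have Cf : Continuous f := hfd.continuous
  have Cf' : Continuous (deriv f) := hfd'.continuous
  have hψdd_eq : deriv (deriv ψ) = fun x => ψ x - ψ x ^ 2 := funext fun x => by linarith [hode x]
  have Cψ'' : Continuous (deriv (deriv ψ)) := by rw [hψdd_eq]; fun_prop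
  have Hψ'' : ∀ x, HasDerivAt (deriv (deriv ψ)) ((1 - 2 * ψ x) * deriv ψ x) x := by
    intro x
    rw [hψdd_eq]
    have h := (Hψ x).sub ((Hψ x).pow 2)
    refine h.congr_deriv (Eq.symm ?_)
    push_cast; ring
  -- periodicity facts
  have hψper : Function.Periodic ψ L := hfund.1.2
  have hψ'per : Function.Periodic (deriv ψ) L := periodic_deriv' hψper
  have hψ''per : Function.Periodic (deriv (deriv ψ)) L := periodic_deriv' hψ'per
  have hf'per : Function.Periodic (deriv f) L := periodic_deriv' hfper
  have hg'per : Function.Periodic (deriv g) L := periodic_deriv' hgper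
  have hψL : ψ L = ψ 0 := by simpa using hψper 0
  have hψ'L : deriv ψ L = deriv ψ 0 := by simpa using hψ'per 0
  have hψ''L : deriv (deriv ψ) L = deriv (deriv ψ) 0 := by simpa using hψ''per 0
  have hfL : f L = f 0 := by simpa using hfper 0
  have hf'L : deriv f L = deriv f 0 := by simpa using hf'per 0
  have hg'L : deriv g L = deriv g 0 := by simpa using hg'per 0
  -- Stage 1 : g = f
  have hvd' : ∀ x, HasDerivAt (fun x => deriv g x - deriv f x) ((1 + ψ x) * (g x - f x)) x := by
    intro x
    have h := (Hg' x).sub (Hf' x)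
    refine h.congr_deriv (Eq.symm ?_)
    linear_combination heq2 x - heq1 x
  have hfg : ∀ x, g x - f x = 0 :=
    stage1 (v := fun x => g x - f x) (vd := fun x => deriv g x - deriv f x) hL hpos Cψ
      (fun x => (Hg x).sub (Hf x)) hvd' (by fun_prop) (hgd'.continuous.sub Cf')
      (hgper.sub hfper) (by simp only [hg'L, hf'L])
  have hfODE : ∀ x, deriv (deriv f) x = (1 - 2 * ψ x) * f x := fun x => by
    linear_combination -heq1 x - ψ x * hfg x
  -- nonconstancy of ψ gives a point where ψ' ≠ 0
  by_cases hall : ∀ t, deriv ψ t = 0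
  · exfalso
    obtain ⟨x, y, hxy⟩ := hnc
    exact hxy (is_const_of_deriv_eq_zero hψd hall x y)
  push_neg at hall
  obtain ⟨x₁, hx₁⟩ := hall
  set c := f x₁ / deriv ψ x₁ with hc
  have hz1 : ∀ x, HasDerivAt (fun x => f x - c * deriv ψ x)
      (deriv f x - c * deriv (deriv ψ) x) x :=
    fun x => (Hf x).sub ((Hψ' x).const_mul c)
  have hz2 : ∀ x, HasDerivAt (fun x => deriv f x - c * deriv (deriv ψ) x)
      ((1 - 2 * ψ x) * (f x - c * deriv ψ x)) x := by
    intro x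
    have h := (Hf' x).sub ((Hψ'' x).const_mul c)
    refine h.congr_deriv (Eq.symm ?_)
    rw [hfODE x]; ring
  have hzx₁ : f x₁ - c * deriv ψ x₁ = 0 := by
    rw [hc]; field_simp; ring
  by_cases hzd0 : deriv f x₁ - c * deriv (deriv ψ) x₁ = 0
  · -- Gronwall : z ≡ 0, so f = c ψ'
    obtain ⟨C, hC⟩ := (isCompact_Icc (a := (0:ℝ)) (b := L)).exists_bound_of_continuousOn
      ((by fun_prop : Continuous fun x => 1 - 2 * ψ x)).continuousOn
    have hCall : ∀ x, |1 - 2 * ψ x| ≤ C := by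
      intro x
      have hper2 : Function.Periodic (fun x => 1 - 2 * ψ x) L := fun t => by simp [hψper t]
      obtain ⟨y, hy, hxy⟩ := hper2.exists_mem_Ico₀ hL x
      have h1 : 1 - 2 * ψ x = 1 - 2 * ψ y := hxy
      rw [h1]
      have := hC y (Set.Ico_subset_Icc_self hy)
      rwa [Real.norm_eq_abs] at this
    have hzzero := ode_zero (a := fun x => 1 - 2 * ψ x) hz1 hz2 hCall hzx₁ hzd0
    refine ⟨c, fun x => ?_, fun x => ?_⟩
    · have h := hzzero x
      linarith
    · have h := hzzero x
      have h2 := hfg x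
      linarith
  · -- Wronskian case : contradiction
    exfalso
    have hWf : ∀ x, HasDerivAt (fun x => (f x - c * deriv ψ x) * deriv (deriv ψ) x -
        (deriv f x - c * deriv (deriv ψ) x) * deriv ψ x) 0 x := by
      intro x
      have h := ((hz1 x).mul (Hψ'' x)).sub ((hz2 x).mul (Hψ' x))
      refine h.congr_deriv (Eq.symm ?_)
      ring
    have hWconst := is_const_of_deriv_eq_zero (fun x => (hWf x).differentiableAt)
      (fun x => (hWf x).deriv)
    set W := (f x₁ - c * deriv ψ x₁) * deriv (deriv ψ) x₁ -
      (deriv f x₁ - c * deriv (deriv ψ) x₁) * deriv ψ x₁ with hWdef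
    have hWval : ∀ x, (f x - c * deriv ψ x) * deriv (deriv ψ) x -
        (deriv f x - c * deriv (deriv ψ) x) * deriv ψ x = W := fun x => hWconst x x₁
    have hWne : W ≠ 0 := by
      have hW2 : W = -((deriv f x₁ - c * deriv (deriv ψ) x₁) * deriv ψ x₁) := by
        rw [hWdef, hzx₁]; ring
      rw [hW2]
      exact neg_ne_zero.mpr (mul_ne_zero hzd0 hx₁)
    have hint := wronskian_contra (L := L) Hψ Hψ' (fun x => by linarith [hode x])
      hz1 hz2 Cψ Cψ' (by fun_prop) (by fun_prop)
      hψL hψ'L (by simp only [hfL, hψ'L]) (by simp only [hf'L, hψ''L]) hWval hWne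
    have hzero := zero_of_int hL (h := fun x => deriv ψ x ^ 2) (by fun_prop)
      (fun x => sq_nonneg _) hint
    have hall2 : ∀ t, deriv ψ t = 0 := by
      intro t
      obtain ⟨y, hy, hxy⟩ := hψ'per.exists_mem_Ico₀ hL t
      rw [hxy]
      have h := hzero y (Set.Ico_subset_Icc_self hy)
      exact pow_eq_zero_iff two_ne_zero |>.mp h
    obtain ⟨x, y, hxy⟩ := hnc
    exact hxy (is_const_of_deriv_eq_zero hψd hall2 x y)
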